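/- arXiv:2605.25587 — 5 statements merged into one kernel-verified Lean document; each statement's English description precedes it below -/
import Mathlib

section
/- Let (A, d) be a difference algebra over a field k of characteristic 0, let (M, Δ) be a bimodule over (A, d), and let μ : A×A×A → M and χ : A×A → M be trilinear resp. bilinear maps satisfying the two 3-cocycle conditions: (i) x·μ(y,z,t) − μ(xy,z,t) + μ(x,yz,t) − μ(x,y,zt) + μ(x,y,z)·t = 0 for all x,y,z,t ∈ A; and (ii) (x + d(x))·χ(y,z) − χ(xy,z) + χ(x,yz) − χ(x,y)·(z + d(z)) = μ(d(x),y,z) + μ(x,d(y),z) + μ(x,y,d(z)) + μ(d(x),d(y),z) + μ(d(x),y,d(z)) + μ(x,d(y),d(z)) + μ(d(x),d(y),d(z)) − Δ(μ(x,y,z)) for all x,y,z ∈ A. Then ((M →0 A, ⊙, μ), (d, Δ, χ)) is a skeletal 2-term difference A∞-algebra, where δ = 0, a⊙b := ab, a⊙u := a·u and u⊙a := u·a for a,b ∈ A, u ∈ M; i.e. axioms (A1)–(A8) and (D1)–(D4) hold with δ = 0. -/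
/-- A 2-term A∞-algebra `(A₁ →δ A₀, ⊙, μ)` over the field `k`. -/
structure TwoTermAInf (k : Type*) [Field k] [CharZero k]
    (A0 A1 : Type*) [AddCommGroup A0] [Module k A0]
    [AddCommGroup A1] [Module k A1] where
  δ : A1 →ₗ[k] A0
  /-- `⊙ : A₀ × A₀ → A₀` -/
  m00 : A0 →ₗ[k] A0 →ₗ[k] A0
  /-- `⊙ : A₀ × A₁ → A₁` -/
  m01 : A0 →ₗ[k] A1 →ₗ[k] A1
  /-- `⊙ : A₁ × A₀ → A₁` -/
  m10 : A1 →ₗ[k] A0 →ₗ[k] A1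
  μ : A0 →ₗ[k] A0 →ₗ[k] A0 →ₗ[k] A1
  ax1 : ∀ (x : A0) (h : A1), δ (m01 x h) = m00 x (δ h)
  ax2 : ∀ (h : A1) (x : A0), δ (m10 h x) = m00 (δ h) x
  ax3 : ∀ (h k' : A1), m01 (δ h) k' = m10 h (δ k')
  ax4 : ∀ x y z : A0, m00 x (m00 y z) - m00 (m00 x y) z = δ (μ x y z)
  ax5 : ∀ (x y : A0) (h : A1), m01 x (m01 y h) - m01 (m00 x y) h = μ x y (δ h)
  ax6 : ∀ (x : A0) (h : A1) (y : A0), m01 x (m10 h y) - m10 (m01 x h) y = μ x (δ h) y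
  ax7 : ∀ (h : A1) (x y : A0), m10 h (m00 x y) - m10 (m10 h x) y = μ (δ h) x y
  ax8 : ∀ x y z t : A0,
    m01 x (μ y z t) - μ (m00 x y) z t + μ x (m00 y z) t
      - μ x y (m00 z t) + m10 (μ x y z) t = 0

/-- A difference operator `(d₀, d₁, d₂)` on a 2-term A∞-algebra. -/
structure TwoTermDiffOp (k : Type*) [Field k] [CharZero k]
    {A0 A1 : Type*} [AddCommGroup A0] [Module k A0]
    [AddCommGroup A1] [Module k A1] (T : TwoTermAInf k A0 A1) where
  d0 : A0 →ₗ[k] A0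
  d1 : A1 →ₗ[k] A1
  comm : ∀ h : A1, d0 (T.δ h) = T.δ (d1 h)
  d2 : A0 →ₗ[k] A0 →ₗ[k] A1
  D1 : ∀ x y : A0,
    T.m00 (d0 x) y + T.m00 x (d0 y) + T.m00 (d0 x) (d0 y) - d0 (T.m00 x y)
      = T.δ (d2 x y)
  D2 : ∀ (x : A0) (h : A1),
    T.m01 (d0 x) h + T.m01 x (d1 h) + T.m01 (d0 x) (d1 h) - d1 (T.m01 x h)
      = d2 x (T.δ h)
  D3 : ∀ (h : A1) (x : A0),
    T.m10 (d1 h) x + T.m10 h (d0 x) + T.m10 (d1 h) (d0 x) - d1 (T.m10 h x)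
      = d2 (T.δ h) x
  D4 : ∀ x y z : A0,
    T.m01 (x + d0 x) (d2 y z) - d2 (T.m00 x y) z + d2 x (T.m00 y z)
        - T.m10 (d2 x y) (z + d0 z)
      = T.μ (d0 x) y z + T.μ x (d0 y) z + T.μ x y (d0 z) + T.μ (d0 x) (d0 y) z
        + T.μ (d0 x) y (d0 z) + T.μ x (d0 y) (d0 z) + T.μ (d0 x) (d0 y) (d0 z)
        - d1 (T.μ x y z)


/-!
With `δ = 0`, axioms (A1)–(A3) and the compatibility `d₀ ∘ δ = δ ∘ d₁` hold trivially,
(A4)–(A7) are associativity of `A` and the bimodule laws of `M`, (D1)–(D3) are the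
twisted Leibniz rules of `d` and `Δ`, and (A8), (D4) are exactly the two cocycle conditions.
-/

section OfCocycle

variable {k A M : Type*} [Field k] [CharZero k]
  [NonUnitalRing A] [Module k A] [IsScalarTower k A A] [SMulCommClass k A A]
  [AddCommGroup M] [Module k M]

def TwoTermAInf.ofCocycle (l : A →ₗ[k] M →ₗ[k] M) (r : M →ₗ[k] A →ₗ[k] M)
    (hl : ∀ (a b : A) (u : M), l (a * b) u = l a (l b u))
    (hr : ∀ (u : M) (a b : A), r u (a * b) = r (r u a) b)
    (hlr : ∀ (a : A) (u : M) (b : A), r (l a u) b = l a (r u b))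
    (μ : A →ₗ[k] A →ₗ[k] A →ₗ[k] M)
    (hμ : ∀ x y z t : A,
      l x (μ y z t) - μ (x * y) z t + μ x (y * z) t - μ x y (z * t) + r (μ x y z) t = 0) :
    TwoTermAInf k A M where
  δ := 0
  m00 := LinearMap.mul k A
  m01 := l
  m10 := r
  μ := μ
  ax1 _ _ := by simp
  ax2 _ _ := by simp
  ax3 _ _ := by simp
  ax4 x y z := by simp [mul_assoc]
  ax5 x y h := by simp [hl]
  ax6 x h y := by simp [hlr]
  ax7 h x y := by simp [hr]
  ax8 := by simpa using hμ

variable {l : A →ₗ[k] M →ₗ[k] M} {r : M →ₗ[k] A →ₗ[k] M}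
  {hl : ∀ (a b : A) (u : M), l (a * b) u = l a (l b u)}
  {hr : ∀ (u : M) (a b : A), r u (a * b) = r (r u a) b}
  {hlr : ∀ (a : A) (u : M) (b : A), r (l a u) b = l a (r u b)}
  {μ : A →ₗ[k] A →ₗ[k] A →ₗ[k] M}
  {hμ : ∀ x y z t : A,
    l x (μ y z t) - μ (x * y) z t + μ x (y * z) t - μ x y (z * t) + r (μ x y z) t = 0}

def TwoTermDiffOp.ofCocycle (d : A →ₗ[k] A)
    (hd : ∀ a b : A, d (a * b) = d a * b + a * d b + d a * d b)
    (Δ : M →ₗ[k] M)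
    (hΔl : ∀ (a : A) (u : M), Δ (l a u) = l (d a) u + l a (Δ u) + l (d a) (Δ u))
    (hΔr : ∀ (u : M) (a : A), Δ (r u a) = r (Δ u) a + r u (d a) + r (Δ u) (d a))
    (χ : A →ₗ[k] A →ₗ[k] M)
    (hχ : ∀ x y z : A,
      l (x + d x) (χ y z) - χ (x * y) z + χ x (y * z) - r (χ x y) (z + d z)
        = μ (d x) y z + μ x (d y) z + μ x y (d z) + μ (d x) (d y) z
          + μ (d x) y (d z) + μ x (d y) (d z) + μ (d x) (d y) (d z)
          - Δ (μ x y z)) :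
    TwoTermDiffOp k (TwoTermAInf.ofCocycle l r hl hr hlr μ hμ) where
  d0 := d
  d1 := Δ
  d2 := χ
  comm _ := by simp [TwoTermAInf.ofCocycle]
  D1 x y := by simp [TwoTermAInf.ofCocycle, hd]
  D2 x h := by simp [TwoTermAInf.ofCocycle, hΔl]
  D3 h x := by simp [TwoTermAInf.ofCocycle, hΔr]
  D4 := by simpa [TwoTermAInf.ofCocycle] using hχ

end OfCocycle

/-- From a difference algebra `(A, d)`, a bimodule `(M, Δ)` over it
(with left action `l` and right action `r`) and a 3-cocycle `(μ, χ)`, the data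
`((M →0 A, ⊙, μ), (d, Δ, χ))` is a skeletal 2-term difference A∞-algebra. -/
theorem cocycle_gives_skeletal
    (k A M : Type*) [Field k] [CharZero k] [Ring A] [Algebra k A]
    [AddCommGroup M] [Module k M]
    (d : A →ₗ[k] A)
    (hd : ∀ a b : A, d (a * b) = d a * b + a * d b + d a * d b)
    (l : A →ₗ[k] M →ₗ[k] M) (r : M →ₗ[k] A →ₗ[k] M)
    (hl : ∀ (a b : A) (u : M), l (a * b) u = l a (l b u))
    (hr : ∀ (u : M) (a b : A), r u (a * b) = r (r u a) b)
    (hlr : ∀ (a : A) (u : M) (b : A), r (l a u) b = l a (r u b))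
    (Δ : M →ₗ[k] M)
    (hΔl : ∀ (a : A) (u : M), Δ (l a u) = l (d a) u + l a (Δ u) + l (d a) (Δ u))
    (hΔr : ∀ (u : M) (a : A), Δ (r u a) = r (Δ u) a + r u (d a) + r (Δ u) (d a))
    (μ : A →ₗ[k] A →ₗ[k] A →ₗ[k] M) (χ : A →ₗ[k] A →ₗ[k] M)
    (hcoc1 : ∀ x y z t : A,
      l x (μ y z t) - μ (x * y) z t + μ x (y * z) t - μ x y (z * t)
        + r (μ x y z) t = 0)
    (hcoc2 : ∀ x y z : A,
      l (x + d x) (χ y z) - χ (x * y) z + χ x (y * z) - r (χ x y) (z + d z)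
        = μ (d x) y z + μ x (d y) z + μ x y (d z) + μ (d x) (d y) z
          + μ (d x) y (d z) + μ x (d y) (d z) + μ (d x) (d y) (d z)
          - Δ (μ x y z)) :
    ∃ (T : TwoTermAInf k A M) (D : TwoTermDiffOp k T),
      T.δ = 0 ∧ T.m00 = LinearMap.mul k A ∧ T.m01 = l ∧ T.m10 = r ∧ T.μ = μ ∧
      D.d0 = d ∧ D.d1 = Δ ∧ D.d2 = χ :=
  ⟨TwoTermAInf.ofCocycle l r hl hr hlr μ hcoc1,
    TwoTermDiffOp.ofCocycle d hd Δ hΔl hΔr χ hcoc2,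
    rfl, rfl, rfl, rfl, rfl, rfl, rfl, rfl⟩
end

section
/- Let ((A₁ →δ A₀, ⊙, μ), (d₀, d₁, d₂)) be a strict 2-term difference A∞-algebra (i.e. μ = 0 and d₂ = 0). Define h ⊙₁ k := δ(h) ⊙ k for h, k ∈ A₁. Then: (i) δ(h) ⊙ k = h ⊙ δ(k), and ⊙₁ is an associative multiplication on A₁; (ii) d₀ is a difference operator on (A₀, ⊙) and d₁ is a difference operator on (A₁, ⊙₁); (iii) δ : A₁ → A₀ is an algebra homomorphism satisfying d₀ ∘ δ = δ ∘ d₁; (iv) the operations x⊙h and h⊙x make (A₁, d₁) a bimodule over the difference algebra (A₀, d₀); and (v) the crossed module identities hold: x⊙(h⊙₁k) = (x⊙h)⊙₁k, h⊙₁(x⊙k) = (h⊙x)⊙₁k, h⊙₁(k⊙x) = (h⊙₁k)⊙x, δ(x⊙h) = x⊙δ(h), δ(h⊙x) = δ(h)⊙x, and δ(h)⊙k = h⊙δ(k) = h⊙₁k, for all x ∈ A₀, h, k ∈ A₁. Hence ((A₀, d₀), (A₁, d₁), δ) is a crossed module of difference algebras. -/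
/-!
With `μ = 0` and `d₂ = 0` the axioms (A5)–(A7) and (D1)–(D3) say literally that `A₁` is an
associative `A₀`-bimodule and that `d₀`, `d₁` satisfy the twisted Leibniz rule. Every identity
about `h ⊙₁ k = δ(h) ⊙ k` then follows by pushing `δ` through `⊙` with (A1)–(A3) and
reassociating with (A5) or (A7).
-/

section

variable {k A0 A1 : Type*} [Field k] [CharZero k] [AddCommGroup A0] [Module k A0]
  [AddCommGroup A1] [Module k A1]

namespace TwoTermAInf

variable (T : TwoTermAInf k A0 A1)

def mul₁ (h k' : A1) : A1 := T.m01 (T.δ h) k'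

theorem m01_m01_of_μ_eq_zero (hμ : T.μ = 0) (x y : A0) (h : A1) :
    T.m01 x (T.m01 y h) = T.m01 (T.m00 x y) h :=
  sub_eq_zero.mp <| (T.ax5 x y h).trans (by simp [hμ])

theorem m01_m10_of_μ_eq_zero (hμ : T.μ = 0) (x : A0) (h : A1) (y : A0) :
    T.m01 x (T.m10 h y) = T.m10 (T.m01 x h) y :=
  sub_eq_zero.mp <| (T.ax6 x h y).trans (by simp [hμ])

theorem m10_m00_of_μ_eq_zero (hμ : T.μ = 0) (h : A1) (x y : A0) :
    T.m10 h (T.m00 x y) = T.m10 (T.m10 h x) y :=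
  sub_eq_zero.mp <| (T.ax7 h x y).trans (by simp [hμ])

theorem δ_mul₁ (h k' : A1) : T.δ (T.mul₁ h k') = T.m00 (T.δ h) (T.δ k') :=
  T.ax1 _ _

theorem mul₁_assoc (hμ : T.μ = 0) (h k' l : A1) :
    T.mul₁ (T.mul₁ h k') l = T.mul₁ h (T.mul₁ k' l) := by
  rw [mul₁, δ_mul₁, mul₁, mul₁, T.m01_m01_of_μ_eq_zero hμ]

theorem m01_mul₁ (hμ : T.μ = 0) (x : A0) (h k' : A1) :
    T.m01 x (T.mul₁ h k') = T.mul₁ (T.m01 x h) k' := by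
  rw [mul₁, mul₁, T.m01_m01_of_μ_eq_zero hμ, T.ax1]

theorem mul₁_m01 (hμ : T.μ = 0) (h : A1) (x : A0) (k' : A1) :
    T.mul₁ h (T.m01 x k') = T.mul₁ (T.m10 h x) k' := by
  rw [mul₁, mul₁, T.ax3, T.ax1, T.m10_m00_of_μ_eq_zero hμ, ← T.ax3]

theorem mul₁_m10 (hμ : T.μ = 0) (h k' : A1) (x : A0) :
    T.mul₁ h (T.m10 k' x) = T.m10 (T.mul₁ h k') x := by
  rw [mul₁, mul₁, T.ax3 h, T.ax2, T.m10_m00_of_μ_eq_zero hμ, ← T.ax3]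

end TwoTermAInf

namespace TwoTermDiffOp

variable {T : TwoTermAInf k A0 A1} (D : TwoTermDiffOp k T)

theorem d0_m00_of_d2_eq_zero (hd2 : D.d2 = 0) (x y : A0) :
    D.d0 (T.m00 x y) = T.m00 (D.d0 x) y + T.m00 x (D.d0 y) + T.m00 (D.d0 x) (D.d0 y) :=
  (sub_eq_zero.mp <| (D.D1 x y).trans (by simp [hd2])).symm

theorem d1_m01_of_d2_eq_zero (hd2 : D.d2 = 0) (x : A0) (h : A1) :
    D.d1 (T.m01 x h) = T.m01 (D.d0 x) h + T.m01 x (D.d1 h) + T.m01 (D.d0 x) (D.d1 h) :=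
  (sub_eq_zero.mp <| (D.D2 x h).trans (by simp [hd2])).symm

theorem d1_m10_of_d2_eq_zero (hd2 : D.d2 = 0) (h : A1) (x : A0) :
    D.d1 (T.m10 h x) = T.m10 (D.d1 h) x + T.m10 h (D.d0 x) + T.m10 (D.d1 h) (D.d0 x) :=
  (sub_eq_zero.mp <| (D.D3 h x).trans (by simp [hd2])).symm

theorem d1_mul₁_of_d2_eq_zero (hd2 : D.d2 = 0) (h k' : A1) :
    D.d1 (T.mul₁ h k')
      = T.mul₁ (D.d1 h) k' + T.mul₁ h (D.d1 k') + T.mul₁ (D.d1 h) (D.d1 k') := by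
  simp only [TwoTermAInf.mul₁, D.d1_m01_of_d2_eq_zero hd2, D.comm]

end TwoTermDiffOp

end

/-- A strict 2-term difference A∞-algebra (`μ = 0`, `d₂ = 0`) yields a
crossed module of difference algebras `((A₀, d₀), (A₁, d₁), δ)`, where
`h ⊙₁ k := δ(h) ⊙ k` is the multiplication on `A₁`. -/
theorem strict_gives_crossed_module
    (k A0 A1 : Type*) [Field k] [CharZero k] [AddCommGroup A0] [Module k A0]
    [AddCommGroup A1] [Module k A1]
    (T : TwoTermAInf k A0 A1) (D : TwoTermDiffOp k T)
    (hμ : T.μ = 0) (hd2 : D.d2 = 0) :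
    -- (i) the two candidate multiplications on A₁ agree, and ⊙₁ is associative
    (∀ h k' : A1, T.m01 (T.δ h) k' = T.m10 h (T.δ k')) ∧
    (∀ h k' l' : A1,
      T.m01 (T.δ (T.m01 (T.δ h) k')) l' = T.m01 (T.δ h) (T.m01 (T.δ k') l')) ∧
    -- (ii) d₀ is a difference operator on (A₀, ⊙) and d₁ on (A₁, ⊙₁)
    (∀ x y : A0,
      D.d0 (T.m00 x y)
        = T.m00 (D.d0 x) y + T.m00 x (D.d0 y) + T.m00 (D.d0 x) (D.d0 y)) ∧
    (∀ h k' : A1,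
      D.d1 (T.m01 (T.δ h) k')
        = T.m01 (T.δ (D.d1 h)) k' + T.m01 (T.δ h) (D.d1 k')
          + T.m01 (T.δ (D.d1 h)) (D.d1 k')) ∧
    -- (iii) δ is a homomorphism of difference algebras
    (∀ h k' : A1, T.δ (T.m01 (T.δ h) k') = T.m00 (T.δ h) (T.δ k')) ∧
    (∀ h : A1, D.d0 (T.δ h) = T.δ (D.d1 h)) ∧
    -- (iv) (A₁, d₁) is a bimodule over the difference algebra (A₀, d₀)
    (∀ (x y : A0) (h : A1), T.m01 x (T.m01 y h) = T.m01 (T.m00 x y) h) ∧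
    (∀ (x : A0) (h : A1) (y : A0), T.m01 x (T.m10 h y) = T.m10 (T.m01 x h) y) ∧
    (∀ (h : A1) (x y : A0), T.m10 h (T.m00 x y) = T.m10 (T.m10 h x) y) ∧
    (∀ (x : A0) (h : A1),
      D.d1 (T.m01 x h)
        = T.m01 (D.d0 x) h + T.m01 x (D.d1 h) + T.m01 (D.d0 x) (D.d1 h)) ∧
    (∀ (h : A1) (x : A0),
      D.d1 (T.m10 h x)
        = T.m10 (D.d1 h) x + T.m10 h (D.d0 x) + T.m10 (D.d1 h) (D.d0 x)) ∧
    -- (v) the crossed module identities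
    (∀ (x : A0) (h k' : A1),
      T.m01 x (T.m01 (T.δ h) k') = T.m01 (T.δ (T.m01 x h)) k') ∧
    (∀ (h : A1) (x : A0) (k' : A1),
      T.m01 (T.δ h) (T.m01 x k') = T.m01 (T.δ (T.m10 h x)) k') ∧
    (∀ (h k' : A1) (x : A0),
      T.m01 (T.δ h) (T.m10 k' x) = T.m10 (T.m01 (T.δ h) k') x) ∧
    (∀ (x : A0) (h : A1), T.δ (T.m01 x h) = T.m00 x (T.δ h)) ∧
    (∀ (h : A1) (x : A0), T.δ (T.m10 h x) = T.m00 (T.δ h) x) ∧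
    (∀ h k' : A1, T.m10 h (T.δ k') = T.m01 (T.δ h) k') :=
  ⟨T.ax3, T.mul₁_assoc hμ, D.d0_m00_of_d2_eq_zero hd2, D.d1_mul₁_of_d2_eq_zero hd2, T.δ_mul₁,
    D.comm, T.m01_m01_of_μ_eq_zero hμ, T.m01_m10_of_μ_eq_zero hμ, T.m10_m00_of_μ_eq_zero hμ,
    D.d1_m01_of_d2_eq_zero hd2, D.d1_m10_of_d2_eq_zero hd2, T.m01_mul₁ hμ, T.mul₁_m01 hμ,
    T.mul₁_m10 hμ, T.ax1, T.ax2, fun h k' => (T.ax3 h k').symm⟩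
end

section
/- Let ((A, d), (A', d'), ∂) be a crossed module of difference algebras over a field k of characteristic 0. Then ((A' →∂ A, ⊙, μ = 0), (d₀ = d, d₁ = d', d₂ = 0)) is a strict 2-term difference A∞-algebra, where a⊙b := ab, a⊙h := ah, h⊙a := ha for a, b ∈ A and h ∈ A'; i.e. axioms (A1)–(A8) hold with μ = 0 and axioms (D1)–(D4) hold with d₂ = 0. -/
/-- A crossed module of difference algebras `((A, d), (A', d'), ∂)`, with left action
`l : A × A' → A'` and right action `r : A' × A → A'`. -/
structure IsCrossedModuleDiff (k : Type*) [Field k] [CharZero k]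
    (A A' : Type*) [Ring A] [Algebra k A] [Ring A'] [Algebra k A']
    (d : A →ₗ[k] A) (d' : A' →ₗ[k] A')
    (l : A →ₗ[k] A' →ₗ[k] A') (r : A' →ₗ[k] A →ₗ[k] A')
    (p : A' →ₗ[k] A) : Prop where
  hd : ∀ a b : A, d (a * b) = d a * b + a * d b + d a * d b
  hd' : ∀ h k' : A', d' (h * k') = d' h * k' + h * d' k' + d' h * d' k'
  bim1 : ∀ (a b : A) (h : A'), l (a * b) h = l a (l b h)
  bim2 : ∀ (h : A') (a b : A), r h (a * b) = r (r h a) b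
  bim3 : ∀ (a : A) (h : A') (b : A), r (l a h) b = l a (r h b)
  dbim1 : ∀ (a : A) (h : A'), d' (l a h) = l (d a) h + l a (d' h) + l (d a) (d' h)
  dbim2 : ∀ (h : A') (a : A), d' (r h a) = r (d' h) a + r h (d a) + r (d' h) (d a)
  phom : ∀ h k' : A', p (h * k') = p h * p k'
  pcomm : ∀ h : A', p (d' h) = d (p h)
  cm1 : ∀ (a : A) (h k' : A'), l a (h * k') = (l a h) * k'
  cm2 : ∀ (h : A') (a : A) (k' : A'), h * (l a k') = (r h a) * k'
  cm3 : ∀ (h k' : A') (a : A), h * (r k' a) = r (h * k') a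
  cm4 : ∀ (a : A) (h : A'), p (l a h) = a * p h
  cm5 : ∀ (h : A') (a : A), p (r h a) = p h * a
  cm6 : ∀ h k' : A', l (p h) k' = h * k'
  cm7 : ∀ h k' : A', r h (p k') = h * k'

section Strict

variable {k : Type*} [Field k] [CharZero k]
  {A0 A1 : Type*} [AddCommGroup A0] [Module k A0] [AddCommGroup A1] [Module k A1]

def TwoTermAInf.ofStrict (δ : A1 →ₗ[k] A0) (m00 : A0 →ₗ[k] A0 →ₗ[k] A0)
    (m01 : A0 →ₗ[k] A1 →ₗ[k] A1) (m10 : A1 →ₗ[k] A0 →ₗ[k] A1)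
    (δ_m01 : ∀ (x : A0) (h : A1), δ (m01 x h) = m00 x (δ h))
    (δ_m10 : ∀ (h : A1) (x : A0), δ (m10 h x) = m00 (δ h) x)
    (m01_δ : ∀ h k' : A1, m01 (δ h) k' = m10 h (δ k'))
    (assoc000 : ∀ x y z : A0, m00 x (m00 y z) = m00 (m00 x y) z)
    (assoc001 : ∀ (x y : A0) (h : A1), m01 x (m01 y h) = m01 (m00 x y) h)
    (assoc010 : ∀ (x : A0) (h : A1) (y : A0), m01 x (m10 h y) = m10 (m01 x h) y)
    (assoc100 : ∀ (h : A1) (x y : A0), m10 h (m00 x y) = m10 (m10 h x) y) :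
    TwoTermAInf k A0 A1 where
  δ := δ
  m00 := m00
  m01 := m01
  m10 := m10
  μ := 0
  ax1 := δ_m01
  ax2 := δ_m10
  ax3 := m01_δ
  ax4 x y z := by simp [assoc000]
  ax5 x y h := by simp [assoc001]
  ax6 x h y := by simp [assoc010]
  ax7 h x y := by simp [assoc100]
  ax8 x y z t := by simp

def TwoTermDiffOp.ofStrict (T : TwoTermAInf k A0 A1) (hμ : T.μ = 0)
    (d0 : A0 →ₗ[k] A0) (d1 : A1 →ₗ[k] A1) (comm : ∀ h : A1, d0 (T.δ h) = T.δ (d1 h))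
    (d0_m00 : ∀ x y : A0,
      d0 (T.m00 x y) = T.m00 (d0 x) y + T.m00 x (d0 y) + T.m00 (d0 x) (d0 y))
    (d1_m01 : ∀ (x : A0) (h : A1),
      d1 (T.m01 x h) = T.m01 (d0 x) h + T.m01 x (d1 h) + T.m01 (d0 x) (d1 h))
    (d1_m10 : ∀ (h : A1) (x : A0),
      d1 (T.m10 h x) = T.m10 (d1 h) x + T.m10 h (d0 x) + T.m10 (d1 h) (d0 x)) :
    TwoTermDiffOp k T where
  d0 := d0
  d1 := d1
  comm := comm
  d2 := 0
  D1 x y := by simp [d0_m00]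
  D2 x h := by simp [d1_m01]
  D3 h x := by simp [d1_m10]
  D4 x y z := by simp [hμ]

end Strict

namespace IsCrossedModuleDiff

variable {k A A' : Type*} [Field k] [CharZero k] [Ring A] [Algebra k A] [Ring A'] [Algebra k A']
  {d : A →ₗ[k] A} {d' : A' →ₗ[k] A'} {l : A →ₗ[k] A' →ₗ[k] A'} {r : A' →ₗ[k] A →ₗ[k] A'}
  {p : A' →ₗ[k] A}

def toTwoTermAInf (H : IsCrossedModuleDiff k A A' d d' l r p) : TwoTermAInf k A A' :=
  .ofStrict p (LinearMap.mul k A) l r H.cm4 H.cm5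
    (fun h k' => (H.cm6 h k').trans (H.cm7 h k').symm)
    (fun x y z => (mul_assoc x y z).symm) (fun x y h => (H.bim1 x y h).symm)
    (fun x h y => (H.bim3 x h y).symm) H.bim2

def toTwoTermDiffOp (H : IsCrossedModuleDiff k A A' d d' l r p) :
    TwoTermDiffOp k H.toTwoTermAInf :=
  .ofStrict _ rfl d d' (fun h => (H.pcomm h).symm) H.hd H.dbim1 H.dbim2

end IsCrossedModuleDiff

/-- A crossed module of difference algebras `((A, d), (A', d'), ∂)`
gives rise to a strict 2-term difference A∞-algebra
`((A' →∂ A, ⊙, μ = 0), (d₀ = d, d₁ = d', d₂ = 0))`. -/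
theorem crossed_module_gives_strict
    (k A A' : Type*) [Field k] [CharZero k] [Ring A] [Algebra k A]
    [Ring A'] [Algebra k A']
    (d : A →ₗ[k] A) (d' : A' →ₗ[k] A')
    (l : A →ₗ[k] A' →ₗ[k] A') (r : A' →ₗ[k] A →ₗ[k] A')
    (p : A' →ₗ[k] A)
    (H : IsCrossedModuleDiff k A A' d d' l r p) :
    ∃ (T : TwoTermAInf k A A') (D : TwoTermDiffOp k T),
      T.δ = p ∧ T.m00 = LinearMap.mul k A ∧ T.m01 = l ∧ T.m10 = r ∧ T.μ = 0 ∧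
      D.d0 = d ∧ D.d1 = d' ∧ D.d2 = 0 :=
  ⟨H.toTwoTermAInf, H.toTwoTermDiffOp, rfl, rfl, rfl, rfl, rfl, rfl, rfl, rfl⟩
end

section
/- Let A be an associative algebra over a field k of characteristic 0 and let (M₁ →δ M₀, ν) be a 2-term bimodule up to homotopy of A. Then the triple 𝔞 := (M₁ →δ̃ A ⊕ M₀, ⊙, μ) is a 2-term A∞-algebra (i.e. axioms (A1)–(A8) hold), where δ̃(ξ) := (0, δ(ξ)), (a, u) ⊙ (b, v) := (ab, a v + u b), (a, u) ⊙ ξ := a ξ, ξ ⊙ (a, u) := ξ a, and μ((a, u), (b, v), (c, w)) := ν(a, b, w) + ν(a, v, c) + ν(u, b, c), for (a, u), (b, v), (c, w) ∈ A ⊕ M₀ and ξ ∈ M₁. -/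
/-!
Every (A1)–(A8) identity for `A ⊕ M₀` splits, by multilinearity, into the components in which
each argument lies either in `A` or in `M₀`. The components valued in `A` are associativity
of `A`; each remaining component is, on the nose, one of the defining identities of the
bimodule up to homotopy, because `μ` restricted to inputs with exactly one argument in `M₀`
is the corresponding `ν`.
-/

namespace TwoTermSemidirect

variable {R A M0 M1 : Type*} [CommSemiring R] [Ring A] [Algebra R A]
  [AddCommGroup M0] [Module R M0] [AddCommGroup M1] [Module R M1]

def mul (lM0 : A →ₗ[R] M0 →ₗ[R] M0) (rM0 : M0 →ₗ[R] A →ₗ[R] M0) (p q : A × M0) : A × M0 :=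
  (p.1 * q.1, lM0 p.1 q.2 + rM0 p.2 q.1)

def mu (ν1 : A →ₗ[R] A →ₗ[R] M0 →ₗ[R] M1) (ν2 : A →ₗ[R] M0 →ₗ[R] A →ₗ[R] M1)
    (ν3 : M0 →ₗ[R] A →ₗ[R] A →ₗ[R] M1) (p q r : A × M0) : M1 :=
  ν1 p.1 q.1 r.2 + ν2 p.1 q.2 r.1 + ν3 p.2 q.1 r.1

variable {δ : M1 →ₗ[R] M0}
  {lM0 : A →ₗ[R] M0 →ₗ[R] M0} {rM0 : M0 →ₗ[R] A →ₗ[R] M0}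
  {lM1 : A →ₗ[R] M1 →ₗ[R] M1} {rM1 : M1 →ₗ[R] A →ₗ[R] M1}
  (ν1 : A →ₗ[R] A →ₗ[R] M0 →ₗ[R] M1) (ν2 : A →ₗ[R] M0 →ₗ[R] A →ₗ[R] M1)
  (ν3 : M0 →ₗ[R] A →ₗ[R] A →ₗ[R] M1)

theorem mu_zero_right (p q : A × M0) (w : M0) : mu ν1 ν2 ν3 p q (0, w) = ν1 p.1 q.1 w := by
  simp [mu]

theorem mu_zero_middle (p r : A × M0) (v : M0) : mu ν1 ν2 ν3 p (0, v) r = ν2 p.1 v r.1 := by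
  simp [mu]

theorem mu_zero_left (q r : A × M0) (u : M0) : mu ν1 ν2 ν3 (0, u) q r = ν3 u q.1 r.1 := by
  simp [mu]

variable {ν1 ν2 ν3}

theorem mul_mul_sub_mul_mul
    (h1 : ∀ (a b : A) (v : M0), lM0 a (lM0 b v) - lM0 (a * b) v = δ (ν1 a b v))
    (h2 : ∀ (a : A) (v : M0) (b : A), lM0 a (rM0 v b) - rM0 (lM0 a v) b = δ (ν2 a v b))
    (h3 : ∀ (v : M0) (a b : A), rM0 v (a * b) - rM0 (rM0 v a) b = δ (ν3 v a b))
    (p q r : A × M0) :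
    mul lM0 rM0 p (mul lM0 rM0 q r) - mul lM0 rM0 (mul lM0 rM0 p q) r =
      (0, δ (mu ν1 ν2 ν3 p q r)) := by
  refine Prod.ext ?_ ?_
  · simp [mul, mul_assoc]
  · simp only [mul, mu, map_add, LinearMap.add_apply, Prod.snd_sub]
    linear_combination (norm := abel) h1 p.1 q.1 r.2 + h2 p.1 q.2 r.1 + h3 p.2 q.1 r.1

theorem mu_coherence
    (h7 : ∀ (a b c : A) (v : M0),
      lM1 a (ν1 b c v) - ν1 (a * b) c v + ν1 a (b * c) v - ν1 a b (lM0 c v) = 0)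
    (h8 : ∀ (a b : A) (v : M0) (c : A),
      lM1 a (ν2 b v c) - ν2 (a * b) v c + ν2 a (lM0 b v) c - ν1 a b (rM0 v c)
        + rM1 (ν1 a b v) c = 0)
    (h9 : ∀ (a : A) (v : M0) (b c : A),
      lM1 a (ν3 v b c) - ν3 (lM0 a v) b c + ν2 a (rM0 v b) c - ν2 a v (b * c)
        + rM1 (ν2 a v b) c = 0)
    (h10 : ∀ (v : M0) (a b c : A),
      ν3 (rM0 v a) b c - ν3 v (a * b) c + ν3 v a (b * c) - rM1 (ν3 v a b) c = 0)
    (p q r s : A × M0) :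
    lM1 p.1 (mu ν1 ν2 ν3 q r s) - mu ν1 ν2 ν3 (mul lM0 rM0 p q) r s
      + mu ν1 ν2 ν3 p (mul lM0 rM0 q r) s - mu ν1 ν2 ν3 p q (mul lM0 rM0 r s)
      + rM1 (mu ν1 ν2 ν3 p q r) s.1 = 0 := by
  simp only [mul, mu, map_add, LinearMap.add_apply]
  -- `h10` is written with the opposite overall sign to the other coherence identities
  linear_combination (norm := abel)
    h7 p.1 q.1 r.1 s.2 + h8 p.1 q.1 r.2 s.1 + h9 p.1 q.2 r.1 s.1 - h10 p.2 q.1 r.1 s.1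

end TwoTermSemidirect

open TwoTermSemidirect in
theorem semidirect_product_is_two_term_AInf_general
    (k A M0 M1 : Type*) [Field k] [Ring A] [Algebra k A]
    [AddCommGroup M0] [Module k M0] [AddCommGroup M1] [Module k M1]
    (δ : M1 →ₗ[k] M0)
    (lM0 : A →ₗ[k] M0 →ₗ[k] M0) (rM0 : M0 →ₗ[k] A →ₗ[k] M0)
    (lM1 : A →ₗ[k] M1 →ₗ[k] M1) (rM1 : M1 →ₗ[k] A →ₗ[k] M1)
    (hδl : ∀ (a : A) (ξ : M1), δ (lM1 a ξ) = lM0 a (δ ξ))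
    (hδr : ∀ (ξ : M1) (a : A), δ (rM1 ξ a) = rM0 (δ ξ) a)
    (ν1 : A →ₗ[k] A →ₗ[k] M0 →ₗ[k] M1)
    (ν2 : A →ₗ[k] M0 →ₗ[k] A →ₗ[k] M1)
    (ν3 : M0 →ₗ[k] A →ₗ[k] A →ₗ[k] M1)
    (h1 : ∀ (a b : A) (v : M0), lM0 a (lM0 b v) - lM0 (a * b) v = δ (ν1 a b v))
    (h2 : ∀ (a : A) (v : M0) (b : A),
      lM0 a (rM0 v b) - rM0 (lM0 a v) b = δ (ν2 a v b))
    (h3 : ∀ (v : M0) (a b : A), rM0 v (a * b) - rM0 (rM0 v a) b = δ (ν3 v a b))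
    (h4 : ∀ (a b : A) (ξ : M1), lM1 a (lM1 b ξ) - lM1 (a * b) ξ = ν1 a b (δ ξ))
    (h5 : ∀ (a : A) (ξ : M1) (b : A),
      lM1 a (rM1 ξ b) - rM1 (lM1 a ξ) b = ν2 a (δ ξ) b)
    (h6 : ∀ (ξ : M1) (a b : A), rM1 ξ (a * b) - rM1 (rM1 ξ a) b = ν3 (δ ξ) a b)
    (h7 : ∀ (a b c : A) (v : M0),
      lM1 a (ν1 b c v) - ν1 (a * b) c v + ν1 a (b * c) v - ν1 a b (lM0 c v) = 0)
    (h8 : ∀ (a b : A) (v : M0) (c : A),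
      lM1 a (ν2 b v c) - ν2 (a * b) v c + ν2 a (lM0 b v) c - ν1 a b (rM0 v c)
        + rM1 (ν1 a b v) c = 0)
    (h9 : ∀ (a : A) (v : M0) (b c : A),
      lM1 a (ν3 v b c) - ν3 (lM0 a v) b c + ν2 a (rM0 v b) c - ν2 a v (b * c)
        + rM1 (ν2 a v b) c = 0)
    (h10 : ∀ (v : M0) (a b c : A),
      ν3 (rM0 v a) b c - ν3 v (a * b) c + ν3 v a (b * c) - rM1 (ν3 v a b) c = 0) :
    let dtil : M1 → A × M0 := fun ξ => ((0 : A), δ ξ)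
    let o00 : A × M0 → A × M0 → A × M0 :=
      fun p q => (p.1 * q.1, lM0 p.1 q.2 + rM0 p.2 q.1)
    let o01 : A × M0 → M1 → M1 := fun p ξ => lM1 p.1 ξ
    let o10 : M1 → A × M0 → M1 := fun ξ p => rM1 ξ p.1
    let mu : A × M0 → A × M0 → A × M0 → M1 :=
      fun p q r => ν1 p.1 q.1 r.2 + ν2 p.1 q.2 r.1 + ν3 p.2 q.1 r.1
    -- (A1)–(A8)
    (∀ (p : A × M0) (ξ : M1), dtil (o01 p ξ) = o00 p (dtil ξ)) ∧
    (∀ (ξ : M1) (p : A × M0), dtil (o10 ξ p) = o00 (dtil ξ) p) ∧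
    (∀ ξ η : M1, o01 (dtil ξ) η = o10 ξ (dtil η)) ∧
    (∀ p q r : A × M0, o00 p (o00 q r) - o00 (o00 p q) r = dtil (mu p q r)) ∧
    (∀ (p q : A × M0) (ξ : M1),
      o01 p (o01 q ξ) - o01 (o00 p q) ξ = mu p q (dtil ξ)) ∧
    (∀ (p : A × M0) (ξ : M1) (q : A × M0),
      o01 p (o10 ξ q) - o10 (o01 p ξ) q = mu p (dtil ξ) q) ∧
    (∀ (ξ : M1) (p q : A × M0),
      o10 ξ (o00 p q) - o10 (o10 ξ p) q = mu (dtil ξ) p q) ∧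
    (∀ p q r s : A × M0,
      o01 p (mu q r s) - mu (o00 p q) r s + mu p (o00 q r) s - mu p q (o00 r s)
        + o10 (mu p q r) s = 0) := by
  intro dtil o00 o01 o10 mu
  refine ⟨fun p ξ => ?_, fun ξ p => ?_, fun ξ η => ?_, mul_mul_sub_mul_mul h1 h2 h3,
    fun p q ξ => (h4 p.1 q.1 ξ).trans (mu_zero_right ν1 ν2 ν3 p q (δ ξ)).symm,
    fun p ξ q => (h5 p.1 ξ q.1).trans (mu_zero_middle ν1 ν2 ν3 p q (δ ξ)).symm,
    fun ξ p q => (h6 ξ p.1 q.1).trans (mu_zero_left ν1 ν2 ν3 p q (δ ξ)).symm,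
    mu_coherence h7 h8 h9 h10⟩
  · simp [dtil, o00, o01, hδl]
  · simp [dtil, o00, o10, hδr]
  · simp [dtil, o01, o10]

/-- Let `A` be an associative algebra and `(M₁ →δ M₀, ν)` a 2-term
bimodule up to homotopy of `A` (actions `lM0, rM0, lM1, rM1`, homotopies
`ν1, ν2, ν3`).  Then the semidirect product `(M₁ →δ̃ A ⊕ M₀, ⊙, μ)` — with
`δ̃ ξ = (0, δ ξ)`, `(a,u) ⊙ (b,v) = (ab, av + ub)`, `(a,u) ⊙ ξ = aξ`,
`ξ ⊙ (a,u) = ξa`, `ξ ⊙ η = 0` and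
`μ((a,u),(b,v),(c,w)) = ν(a,b,w) + ν(a,v,c) + ν(u,b,c)` — is a 2-term
A∞-algebra, i.e. axioms (A1)–(A8) hold. -/
theorem semidirect_product_is_two_term_AInf
    (k A M0 M1 : Type*) [Field k] [CharZero k] [Ring A] [Algebra k A]
    [AddCommGroup M0] [Module k M0] [AddCommGroup M1] [Module k M1]
    (δ : M1 →ₗ[k] M0)
    (lM0 : A →ₗ[k] M0 →ₗ[k] M0) (rM0 : M0 →ₗ[k] A →ₗ[k] M0)
    (lM1 : A →ₗ[k] M1 →ₗ[k] M1) (rM1 : M1 →ₗ[k] A →ₗ[k] M1)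
    (hδl : ∀ (a : A) (ξ : M1), δ (lM1 a ξ) = lM0 a (δ ξ))
    (hδr : ∀ (ξ : M1) (a : A), δ (rM1 ξ a) = rM0 (δ ξ) a)
    (ν1 : A →ₗ[k] A →ₗ[k] M0 →ₗ[k] M1)
    (ν2 : A →ₗ[k] M0 →ₗ[k] A →ₗ[k] M1)
    (ν3 : M0 →ₗ[k] A →ₗ[k] A →ₗ[k] M1)
    (h1 : ∀ (a b : A) (v : M0), lM0 a (lM0 b v) - lM0 (a * b) v = δ (ν1 a b v))
    (h2 : ∀ (a : A) (v : M0) (b : A),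
      lM0 a (rM0 v b) - rM0 (lM0 a v) b = δ (ν2 a v b))
    (h3 : ∀ (v : M0) (a b : A), rM0 v (a * b) - rM0 (rM0 v a) b = δ (ν3 v a b))
    (h4 : ∀ (a b : A) (ξ : M1), lM1 a (lM1 b ξ) - lM1 (a * b) ξ = ν1 a b (δ ξ))
    (h5 : ∀ (a : A) (ξ : M1) (b : A),
      lM1 a (rM1 ξ b) - rM1 (lM1 a ξ) b = ν2 a (δ ξ) b)
    (h6 : ∀ (ξ : M1) (a b : A), rM1 ξ (a * b) - rM1 (rM1 ξ a) b = ν3 (δ ξ) a b)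
    (h7 : ∀ (a b c : A) (v : M0),
      lM1 a (ν1 b c v) - ν1 (a * b) c v + ν1 a (b * c) v - ν1 a b (lM0 c v) = 0)
    (h8 : ∀ (a b : A) (v : M0) (c : A),
      lM1 a (ν2 b v c) - ν2 (a * b) v c + ν2 a (lM0 b v) c - ν1 a b (rM0 v c)
        + rM1 (ν1 a b v) c = 0)
    (h9 : ∀ (a : A) (v : M0) (b c : A),
      lM1 a (ν3 v b c) - ν3 (lM0 a v) b c + ν2 a (rM0 v b) c - ν2 a v (b * c)
        + rM1 (ν2 a v b) c = 0)
    (h10 : ∀ (v : M0) (a b c : A),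
      ν3 (rM0 v a) b c - ν3 v (a * b) c + ν3 v a (b * c) - rM1 (ν3 v a b) c = 0) :
    let dtil : M1 → A × M0 := fun ξ => ((0 : A), δ ξ)
    let o00 : A × M0 → A × M0 → A × M0 :=
      fun p q => (p.1 * q.1, lM0 p.1 q.2 + rM0 p.2 q.1)
    let o01 : A × M0 → M1 → M1 := fun p ξ => lM1 p.1 ξ
    let o10 : M1 → A × M0 → M1 := fun ξ p => rM1 ξ p.1
    let mu : A × M0 → A × M0 → A × M0 → M1 :=
      fun p q r => ν1 p.1 q.1 r.2 + ν2 p.1 q.2 r.1 + ν3 p.2 q.1 r.1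
    -- (A1)–(A8)
    (∀ (p : A × M0) (ξ : M1), dtil (o01 p ξ) = o00 p (dtil ξ)) ∧
    (∀ (ξ : M1) (p : A × M0), dtil (o10 ξ p) = o00 (dtil ξ) p) ∧
    (∀ ξ η : M1, o01 (dtil ξ) η = o10 ξ (dtil η)) ∧
    (∀ p q r : A × M0, o00 p (o00 q r) - o00 (o00 p q) r = dtil (mu p q r)) ∧
    (∀ (p q : A × M0) (ξ : M1),
      o01 p (o01 q ξ) - o01 (o00 p q) ξ = mu p q (dtil ξ)) ∧
    (∀ (p : A × M0) (ξ : M1) (q : A × M0),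
      o01 p (o10 ξ q) - o10 (o01 p ξ) q = mu p (dtil ξ) q) ∧
    (∀ (ξ : M1) (p q : A × M0),
      o10 ξ (o00 p q) - o10 (o10 ξ p) q = mu (dtil ξ) p q) ∧
    (∀ p q r s : A × M0,
      o01 p (mu q r s) - mu (o00 p q) r s + mu p (o00 q r) s - mu p q (o00 r s)
        + o10 (mu p q r) s = 0) :=
  semidirect_product_is_two_term_AInf_general k A M0 M1 δ lM0 rM0 lM1 rM1 hδl hδr ν1 ν2 ν3 h1 h2 h3
    h4 h5 h6 h7 h8 h9 h10
end

section
/- Let (A, d) be a difference algebra over a field k of characteristic 0 and let ((M₁ →δ M₀, ν), Δ₀, Δ₁, θ) be a 2-term bimodule up to homotopy over (A, d). Then (𝔞, 𝔡) = ((M₁ →δ̃ A ⊕ M₀, ⊙, μ), (d₀ = d ⊕ Δ₀, d₁ = Δ₁, d₂)) is a 2-term difference A∞-algebra, where 𝔞 is the semidirect product 2-term A∞-algebra with δ̃(ξ) = (0, δ(ξ)), (a, u)⊙(b, v) = (ab, av + ub), (a, u)⊙ξ = aξ, ξ⊙(a, u) = ξa, μ((a,u),(b,v),(c,w)) = ν(a,b,w)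 + ν(a,v,c) + ν(u,b,c), and d₂((a, u), (b, v)) := θ(a, v) + θ(u, b); i.e. the triple (d₀, d₁, d₂) satisfies d₀∘δ̃ = δ̃∘d₁ and axioms (D1)–(D4). -/
/-!
On `A ⊕ M₀` all products of two elements of `M₀` vanish, so each axiom of a difference
operator on the semidirect product splits, by multilinearity, into the summands in which the
`M₀`-component sits in one given slot. Each summand is one of the conditions defining a
bimodule up to homotopy over `(A, d)`: (D1) is the difference Leibniz rule of `d` plus the
two conditions computing `δ ∘ θ`, (D2) and (D3) are the conditions on `θ(a, δξ)` and `θ(δξ, a)`, and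
(D4) is the sum of the three coherence conditions between `θ` and `ν`, one for each position
of the `M₀`-argument.
-/

section SemidirectProduct

variable {k A M0 M1 : Type*} [CommSemiring k] [Ring A] [Module k A]
  [AddCommGroup M0] [Module k M0] [AddCommGroup M1] [Module k M1]

def semidirectMul (lM0 : A →ₗ[k] M0 →ₗ[k] M0) (rM0 : M0 →ₗ[k] A →ₗ[k] M0)
    (p q : A × M0) : A × M0 :=
  (p.1 * q.1, lM0 p.1 q.2 + rM0 p.2 q.1)

def semidirectAssociator (ν1 : A →ₗ[k] A →ₗ[k] M0 →ₗ[k] M1)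
    (ν2 : A →ₗ[k] M0 →ₗ[k] A →ₗ[k] M1) (ν3 : M0 →ₗ[k] A →ₗ[k] A →ₗ[k] M1)
    (p q r : A × M0) : M1 :=
  ν1 p.1 q.1 r.2 + ν2 p.1 q.2 r.1 + ν3 p.2 q.1 r.1

def semidirectHomotopy (θl : A →ₗ[k] M0 →ₗ[k] M1) (θr : M0 →ₗ[k] A →ₗ[k] M1)
    (p q : A × M0) : M1 :=
  θl p.1 q.2 + θr p.2 q.1

variable {d : A →ₗ[k] A} {δ : M1 →ₗ[k] M0}
  {lM0 : A →ₗ[k] M0 →ₗ[k] M0} {rM0 : M0 →ₗ[k] A →ₗ[k] M0}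
  {lM1 : A →ₗ[k] M1 →ₗ[k] M1} {rM1 : M1 →ₗ[k] A →ₗ[k] M1}
  {ν1 : A →ₗ[k] A →ₗ[k] M0 →ₗ[k] M1} {ν2 : A →ₗ[k] M0 →ₗ[k] A →ₗ[k] M1}
  {ν3 : M0 →ₗ[k] A →ₗ[k] A →ₗ[k] M1}
  {Δ0 : M0 →ₗ[k] M0} {Δ1 : M1 →ₗ[k] M1}
  {θl : A →ₗ[k] M0 →ₗ[k] M1} {θr : M0 →ₗ[k] A →ₗ[k] M1}

local infix:70 " ⊙ " => semidirectMul lM0 rM0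
local notation "𝔡₀" => Prod.map d Δ0
local notation "𝔡₂" => semidirectHomotopy θl θr
local notation "μ" => semidirectAssociator ν1 ν2 ν3

theorem semidirectHomotopy_mk_zero_right (p : A × M0) (v : M0) :
    𝔡₂ p (0, v) = θl p.1 v := by
  simp [semidirectHomotopy]

theorem semidirectHomotopy_mk_zero_left (v : M0) (q : A × M0) :
    𝔡₂ (0, v) q = θr v q.1 := by
  simp [semidirectHomotopy]

theorem semidirectMul_difference_leibniz
    (hd : ∀ a b : A, d (a * b) = d a * b + a * d b + d a * d b)
    (hc1 : ∀ (a : A) (v : M0),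
      lM0 (d a) v + lM0 a (Δ0 v) + lM0 (d a) (Δ0 v) - Δ0 (lM0 a v) = δ (θl a v))
    (hc2 : ∀ (v : M0) (a : A),
      rM0 (Δ0 v) a + rM0 v (d a) + rM0 (Δ0 v) (d a) - Δ0 (rM0 v a) = δ (θr v a))
    (p q : A × M0) :
    𝔡₀ p ⊙ q + p ⊙ 𝔡₀ q + 𝔡₀ p ⊙ 𝔡₀ q - 𝔡₀ (p ⊙ q) = (0, δ (𝔡₂ p q)) := by
  obtain ⟨a, u⟩ := p
  obtain ⟨b, v⟩ := q
  refine Prod.ext ?_ ?_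
  · simp only [semidirectMul, Prod.map, Prod.fst_add, Prod.fst_sub, hd]
    abel
  · simp only [semidirectMul, semidirectHomotopy, Prod.map, Prod.snd_add, Prod.snd_sub,
      map_add, ← hc1, ← hc2]
    abel

theorem semidirectHomotopy_difference_coherence
    (hc5 : ∀ (a b : A) (v : M0),
      lM1 (a + d a) (θl b v) - θl (a * b) v + θl a (lM0 b v)
        = ν1 (d a) b v + ν1 a (d b) v + ν1 a b (Δ0 v) + ν1 (d a) (d b) v
          + ν1 (d a) b (Δ0 v) + ν1 a (d b) (Δ0 v) + ν1 (d a) (d b) (Δ0 v)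
          - Δ1 (ν1 a b v))
    (hc6 : ∀ (a : A) (v : M0) (b : A),
      lM1 (a + d a) (θr v b) - θr (lM0 a v) b + θl a (rM0 v b)
          - rM1 (θl a v) (b + d b)
        = ν2 (d a) v b + ν2 a (Δ0 v) b + ν2 a v (d b) + ν2 (d a) (Δ0 v) b
          + ν2 (d a) v (d b) + ν2 a (Δ0 v) (d b) + ν2 (d a) (Δ0 v) (d b)
          - Δ1 (ν2 a v b))
    (hc7 : ∀ (v : M0) (a b : A),
      -θr (rM0 v a) b + θr v (a * b) - rM1 (θr v a) (b + d b)
        = ν3 (Δ0 v) a b + ν3 v (d a) b + ν3 v a (d b) + ν3 (Δ0 v) (d a) b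
          + ν3 (Δ0 v) a (d b) + ν3 v (d a) (d b) + ν3 (Δ0 v) (d a) (d b)
          - Δ1 (ν3 v a b))
    (p q r : A × M0) :
    lM1 (p + 𝔡₀ p).1 (𝔡₂ q r) - 𝔡₂ (p ⊙ q) r + 𝔡₂ p (q ⊙ r) - rM1 (𝔡₂ p q) (r + 𝔡₀ r).1
      = μ (𝔡₀ p) q r + μ p (𝔡₀ q) r + μ p q (𝔡₀ r) + μ (𝔡₀ p) (𝔡₀ q) r
        + μ (𝔡₀ p) q (𝔡₀ r) + μ p (𝔡₀ q) (𝔡₀ r) + μ (𝔡₀ p) (𝔡₀ q) (𝔡₀ r) - Δ1 (μ p q r) := by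
  obtain ⟨a, u⟩ := p
  obtain ⟨b, v⟩ := q
  obtain ⟨c, w⟩ := r
  have e5 := hc5 a b w
  have e6 := hc6 a v c
  have e7 := hc7 u b c
  simp only [map_add, LinearMap.add_apply] at e5 e6 e7
  simp only [semidirectMul, semidirectHomotopy, semidirectAssociator, Prod.map,
    Prod.fst_add, map_add, LinearMap.add_apply]
  linear_combination (norm := module) e5 + e6 + e7

end SemidirectProduct

theorem semidirect_product_is_two_term_difference_AInf_general
    (k A M0 M1 : Type*) [Field k] [Ring A] [Algebra k A]
    [AddCommGroup M0] [Module k M0] [AddCommGroup M1] [Module k M1]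
    (d : A →ₗ[k] A)
    (hd : ∀ a b : A, d (a * b) = d a * b + a * d b + d a * d b)
    (δ : M1 →ₗ[k] M0)
    (lM0 : A →ₗ[k] M0 →ₗ[k] M0) (rM0 : M0 →ₗ[k] A →ₗ[k] M0)
    (lM1 : A →ₗ[k] M1 →ₗ[k] M1) (rM1 : M1 →ₗ[k] A →ₗ[k] M1)
    (ν1 : A →ₗ[k] A →ₗ[k] M0 →ₗ[k] M1)
    (ν2 : A →ₗ[k] M0 →ₗ[k] A →ₗ[k] M1)
    (ν3 : M0 →ₗ[k] A →ₗ[k] A →ₗ[k] M1)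
    (Δ0 : M0 →ₗ[k] M0) (Δ1 : M1 →ₗ[k] M1)
    (hΔδ : ∀ ξ : M1, Δ0 (δ ξ) = δ (Δ1 ξ))
    (θl : A →ₗ[k] M0 →ₗ[k] M1) (θr : M0 →ₗ[k] A →ₗ[k] M1)
    (hc1 : ∀ (a : A) (v : M0),
      lM0 (d a) v + lM0 a (Δ0 v) + lM0 (d a) (Δ0 v) - Δ0 (lM0 a v) = δ (θl a v))
    (hc2 : ∀ (v : M0) (a : A),
      rM0 (Δ0 v) a + rM0 v (d a) + rM0 (Δ0 v) (d a) - Δ0 (rM0 v a) = δ (θr v a))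
    (hc3 : ∀ (a : A) (ξ : M1),
      lM1 (d a) ξ + lM1 a (Δ1 ξ) + lM1 (d a) (Δ1 ξ) - Δ1 (lM1 a ξ) = θl a (δ ξ))
    (hc4 : ∀ (ξ : M1) (a : A),
      rM1 (Δ1 ξ) a + rM1 ξ (d a) + rM1 (Δ1 ξ) (d a) - Δ1 (rM1 ξ a) = θr (δ ξ) a)
    (hc5 : ∀ (a b : A) (v : M0),
      lM1 (a + d a) (θl b v) - θl (a * b) v + θl a (lM0 b v)
        = ν1 (d a) b v + ν1 a (d b) v + ν1 a b (Δ0 v) + ν1 (d a) (d b) v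
          + ν1 (d a) b (Δ0 v) + ν1 a (d b) (Δ0 v) + ν1 (d a) (d b) (Δ0 v)
          - Δ1 (ν1 a b v))
    (hc6 : ∀ (a : A) (v : M0) (b : A),
      lM1 (a + d a) (θr v b) - θr (lM0 a v) b + θl a (rM0 v b)
          - rM1 (θl a v) (b + d b)
        = ν2 (d a) v b + ν2 a (Δ0 v) b + ν2 a v (d b) + ν2 (d a) (Δ0 v) b
          + ν2 (d a) v (d b) + ν2 a (Δ0 v) (d b) + ν2 (d a) (Δ0 v) (d b)
          - Δ1 (ν2 a v b))
    (hc7 : ∀ (v : M0) (a b : A),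
      -θr (rM0 v a) b + θr v (a * b) - rM1 (θr v a) (b + d b)
        = ν3 (Δ0 v) a b + ν3 v (d a) b + ν3 v a (d b) + ν3 (Δ0 v) (d a) b
          + ν3 (Δ0 v) a (d b) + ν3 v (d a) (d b) + ν3 (Δ0 v) (d a) (d b)
          - Δ1 (ν3 v a b)) :
    let dtil : M1 → A × M0 := fun ξ => ((0 : A), δ ξ)
    let o00 : A × M0 → A × M0 → A × M0 :=
      fun p q => (p.1 * q.1, lM0 p.1 q.2 + rM0 p.2 q.1)
    let o01 : A × M0 → M1 → M1 := fun p ξ => lM1 p.1 ξ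
    let o10 : M1 → A × M0 → M1 := fun ξ p => rM1 ξ p.1
    let mu : A × M0 → A × M0 → A × M0 → M1 :=
      fun p q r => ν1 p.1 q.1 r.2 + ν2 p.1 q.2 r.1 + ν3 p.2 q.1 r.1
    let D0 : A × M0 → A × M0 := fun p => (d p.1, Δ0 p.2)
    let d2 : A × M0 → A × M0 → M1 := fun p q => θl p.1 q.2 + θr p.2 q.1
    -- compatibility d₀ ∘ δ̃ = δ̃ ∘ d₁ and axioms (D1)–(D4)
    (∀ ξ : M1, D0 (dtil ξ) = dtil (Δ1 ξ)) ∧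
    (∀ p q : A × M0,
      o00 (D0 p) q + o00 p (D0 q) + o00 (D0 p) (D0 q) - D0 (o00 p q)
        = dtil (d2 p q)) ∧
    (∀ (p : A × M0) (ξ : M1),
      o01 (D0 p) ξ + o01 p (Δ1 ξ) + o01 (D0 p) (Δ1 ξ) - Δ1 (o01 p ξ)
        = d2 p (dtil ξ)) ∧
    (∀ (ξ : M1) (p : A × M0),
      o10 (Δ1 ξ) p + o10 ξ (D0 p) + o10 (Δ1 ξ) (D0 p) - Δ1 (o10 ξ p)
        = d2 (dtil ξ) p) ∧
    (∀ p q r : A × M0,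
      o01 (p + D0 p) (d2 q r) - d2 (o00 p q) r + d2 p (o00 q r)
          - o10 (d2 p q) (r + D0 r)
        = mu (D0 p) q r + mu p (D0 q) r + mu p q (D0 r) + mu (D0 p) (D0 q) r
          + mu (D0 p) q (D0 r) + mu p (D0 q) (D0 r) + mu (D0 p) (D0 q) (D0 r)
          - Δ1 (mu p q r)) := by
  intro dtil o00 o01 o10 mu D0 d2
  refine ⟨fun ξ => Prod.ext (map_zero d) (hΔδ ξ),
    semidirectMul_difference_leibniz hd hc1 hc2,
    fun p ξ => (hc3 p.1 ξ).trans (semidirectHomotopy_mk_zero_right p (δ ξ)).symm,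
    fun ξ p => (hc4 ξ p.1).trans (semidirectHomotopy_mk_zero_left (δ ξ) p).symm,
    semidirectHomotopy_difference_coherence hc5 hc6 hc7⟩

/-- Let `(A, d)` be a difference algebra and
`((M₁ →δ M₀, ν), Δ₀, Δ₁, θ)` a 2-term bimodule up to homotopy over `(A, d)`.
Then the semidirect product 2-term A∞-algebra `(M₁ →δ̃ A ⊕ M₀, ⊙, μ)` together
with `d₀ = d ⊕ Δ₀`, `d₁ = Δ₁` and `d₂((a,u),(b,v)) = θ(a,v) + θ(u,b)` is a
2-term difference A∞-algebra: `d₀ ∘ δ̃ = δ̃ ∘ d₁` and axioms (D1)–(D4) hold. -/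
theorem semidirect_product_is_two_term_difference_AInf
    (k A M0 M1 : Type*) [Field k] [CharZero k] [Ring A] [Algebra k A]
    [AddCommGroup M0] [Module k M0] [AddCommGroup M1] [Module k M1]
    (d : A →ₗ[k] A)
    (hd : ∀ a b : A, d (a * b) = d a * b + a * d b + d a * d b)
    (δ : M1 →ₗ[k] M0)
    (lM0 : A →ₗ[k] M0 →ₗ[k] M0) (rM0 : M0 →ₗ[k] A →ₗ[k] M0)
    (lM1 : A →ₗ[k] M1 →ₗ[k] M1) (rM1 : M1 →ₗ[k] A →ₗ[k] M1)
    (hδl : ∀ (a : A) (ξ : M1), δ (lM1 a ξ) = lM0 a (δ ξ))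
    (hδr : ∀ (ξ : M1) (a : A), δ (rM1 ξ a) = rM0 (δ ξ) a)
    (ν1 : A →ₗ[k] A →ₗ[k] M0 →ₗ[k] M1)
    (ν2 : A →ₗ[k] M0 →ₗ[k] A →ₗ[k] M1)
    (ν3 : M0 →ₗ[k] A →ₗ[k] A →ₗ[k] M1)
    (h1 : ∀ (a b : A) (v : M0), lM0 a (lM0 b v) - lM0 (a * b) v = δ (ν1 a b v))
    (h2 : ∀ (a : A) (v : M0) (b : A),
      lM0 a (rM0 v b) - rM0 (lM0 a v) b = δ (ν2 a v b))
    (h3 : ∀ (v : M0) (a b : A), rM0 v (a * b) - rM0 (rM0 v a) b = δ (ν3 v a b))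
    (h4 : ∀ (a b : A) (ξ : M1), lM1 a (lM1 b ξ) - lM1 (a * b) ξ = ν1 a b (δ ξ))
    (h5 : ∀ (a : A) (ξ : M1) (b : A),
      lM1 a (rM1 ξ b) - rM1 (lM1 a ξ) b = ν2 a (δ ξ) b)
    (h6 : ∀ (ξ : M1) (a b : A), rM1 ξ (a * b) - rM1 (rM1 ξ a) b = ν3 (δ ξ) a b)
    (h7 : ∀ (a b c : A) (v : M0),
      lM1 a (ν1 b c v) - ν1 (a * b) c v + ν1 a (b * c) v - ν1 a b (lM0 c v) = 0)
    (h8 : ∀ (a b : A) (v : M0) (c : A),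
      lM1 a (ν2 b v c) - ν2 (a * b) v c + ν2 a (lM0 b v) c - ν1 a b (rM0 v c)
        + rM1 (ν1 a b v) c = 0)
    (h9 : ∀ (a : A) (v : M0) (b c : A),
      lM1 a (ν3 v b c) - ν3 (lM0 a v) b c + ν2 a (rM0 v b) c - ν2 a v (b * c)
        + rM1 (ν2 a v b) c = 0)
    (h10 : ∀ (v : M0) (a b c : A),
      ν3 (rM0 v a) b c - ν3 v (a * b) c + ν3 v a (b * c) - rM1 (ν3 v a b) c = 0)
    (Δ0 : M0 →ₗ[k] M0) (Δ1 : M1 →ₗ[k] M1)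
    (hΔδ : ∀ ξ : M1, Δ0 (δ ξ) = δ (Δ1 ξ))
    (θl : A →ₗ[k] M0 →ₗ[k] M1) (θr : M0 →ₗ[k] A →ₗ[k] M1)
    (hc1 : ∀ (a : A) (v : M0),
      lM0 (d a) v + lM0 a (Δ0 v) + lM0 (d a) (Δ0 v) - Δ0 (lM0 a v) = δ (θl a v))
    (hc2 : ∀ (v : M0) (a : A),
      rM0 (Δ0 v) a + rM0 v (d a) + rM0 (Δ0 v) (d a) - Δ0 (rM0 v a) = δ (θr v a))
    (hc3 : ∀ (a : A) (ξ : M1),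
      lM1 (d a) ξ + lM1 a (Δ1 ξ) + lM1 (d a) (Δ1 ξ) - Δ1 (lM1 a ξ) = θl a (δ ξ))
    (hc4 : ∀ (ξ : M1) (a : A),
      rM1 (Δ1 ξ) a + rM1 ξ (d a) + rM1 (Δ1 ξ) (d a) - Δ1 (rM1 ξ a) = θr (δ ξ) a)
    (hc5 : ∀ (a b : A) (v : M0),
      lM1 (a + d a) (θl b v) - θl (a * b) v + θl a (lM0 b v)
        = ν1 (d a) b v + ν1 a (d b) v + ν1 a b (Δ0 v) + ν1 (d a) (d b) v
          + ν1 (d a) b (Δ0 v) + ν1 a (d b) (Δ0 v) + ν1 (d a) (d b) (Δ0 v)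
          - Δ1 (ν1 a b v))
    (hc6 : ∀ (a : A) (v : M0) (b : A),
      lM1 (a + d a) (θr v b) - θr (lM0 a v) b + θl a (rM0 v b)
          - rM1 (θl a v) (b + d b)
        = ν2 (d a) v b + ν2 a (Δ0 v) b + ν2 a v (d b) + ν2 (d a) (Δ0 v) b
          + ν2 (d a) v (d b) + ν2 a (Δ0 v) (d b) + ν2 (d a) (Δ0 v) (d b)
          - Δ1 (ν2 a v b))
    (hc7 : ∀ (v : M0) (a b : A),
      -θr (rM0 v a) b + θr v (a * b) - rM1 (θr v a) (b + d b)
        = ν3 (Δ0 v) a b + ν3 v (d a) b + ν3 v a (d b) + ν3 (Δ0 v) (d a) b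
          + ν3 (Δ0 v) a (d b) + ν3 v (d a) (d b) + ν3 (Δ0 v) (d a) (d b)
          - Δ1 (ν3 v a b)) :
    let dtil : M1 → A × M0 := fun ξ => ((0 : A), δ ξ)
    let o00 : A × M0 → A × M0 → A × M0 :=
      fun p q => (p.1 * q.1, lM0 p.1 q.2 + rM0 p.2 q.1)
    let o01 : A × M0 → M1 → M1 := fun p ξ => lM1 p.1 ξ
    let o10 : M1 → A × M0 → M1 := fun ξ p => rM1 ξ p.1
    let mu : A × M0 → A × M0 → A × M0 → M1 :=
      fun p q r => ν1 p.1 q.1 r.2 + ν2 p.1 q.2 r.1 + ν3 p.2 q.1 r.1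
    let D0 : A × M0 → A × M0 := fun p => (d p.1, Δ0 p.2)
    let d2 : A × M0 → A × M0 → M1 := fun p q => θl p.1 q.2 + θr p.2 q.1
    -- compatibility d₀ ∘ δ̃ = δ̃ ∘ d₁ and axioms (D1)–(D4)
    (∀ ξ : M1, D0 (dtil ξ) = dtil (Δ1 ξ)) ∧
    (∀ p q : A × M0,
      o00 (D0 p) q + o00 p (D0 q) + o00 (D0 p) (D0 q) - D0 (o00 p q)
        = dtil (d2 p q)) ∧
    (∀ (p : A × M0) (ξ : M1),
      o01 (D0 p) ξ + o01 p (Δ1 ξ) + o01 (D0 p) (Δ1 ξ) - Δ1 (o01 p ξ)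
        = d2 p (dtil ξ)) ∧
    (∀ (ξ : M1) (p : A × M0),
      o10 (Δ1 ξ) p + o10 ξ (D0 p) + o10 (Δ1 ξ) (D0 p) - Δ1 (o10 ξ p)
        = d2 (dtil ξ) p) ∧
    (∀ p q r : A × M0,
      o01 (p + D0 p) (d2 q r) - d2 (o00 p q) r + d2 p (o00 q r)
          - o10 (d2 p q) (r + D0 r)
        = mu (D0 p) q r + mu p (D0 q) r + mu p q (D0 r) + mu (D0 p) (D0 q) r
          + mu (D0 p) q (D0 r) + mu p (D0 q) (D0 r) + mu (D0 p) (D0 q) (D0 r)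
          - Δ1 (mu p q r)) :=
  semidirect_product_is_two_term_difference_AInf_general k A M0 M1 d hd δ lM0 rM0 lM1 rM1 ν1 ν2 ν3
    Δ0 Δ1 hΔδ θl θr hc1 hc2 hc3 hc4 hc5 hc6 hc7
end
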